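/- Let φ : Σ → Y be a right closing open code from a shift space Σ to an irreducible shift of finite type Y. Then Σ is a nonwandering shift of finite type. -/

import Mathlib

open Set Function Filter

variable {A : Type*} {B : Type*} {C : Type*}

/-- The shift map on the full shift. -/
def shiftMap (x : ℤ → A) : ℤ → A := fun i => x (i + 1)

/-- A shift space (subshift): a closed shift-invariant subset of the full shift. -/
def IsSubshift [TopologicalSpace A] (X : Set (ℤ → A)) : Prop :=
  IsClosed X ∧ shiftMap '' X = X

/-- The word `w` occurs in `x` at position `k`. -/
def OccursAt (x : ℤ → A) (k : ℤ) (w : List A) : Prop :=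
  ∀ i : Fin w.length, x (k + ((i : ℕ) : ℤ)) = w.get i

/-- The word `w` belongs to the language of `X`. -/
def WordIn (X : Set (ℤ → A)) (w : List A) : Prop :=
  ∃ x ∈ X, ∃ k : ℤ, OccursAt x k w

/-- Irreducibility of a shift space. -/
def IrreducibleSubshift (X : Set (ℤ → A)) : Prop :=
  ∀ u v : List A, WordIn X u → WordIn X v → ∃ w : List A, WordIn X (u ++ w ++ v)

/-- Nonwandering shift space. -/
def NonwanderingSubshift (X : Set (ℤ → A)) : Prop :=
  ∀ u : List A, WordIn X u → ∃ w : List A, WordIn X (u ++ w ++ u)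

/-- A shift of finite type: defined by a finite set of forbidden words. -/
def IsSFT (X : Set (ℤ → A)) : Prop :=
  ∃ F : Finset (List A), X = {x : ℤ → A | ∀ w ∈ F, ∀ k : ℤ, ¬ OccursAt x k w}

/-- A (sliding block) code: a continuous shift-commuting map between shift spaces. -/
def IsCode [TopologicalSpace A] [TopologicalSpace B]
    {X : Set (ℤ → A)} {Y : Set (ℤ → B)} (φ : X → Y) : Prop :=
  Continuous φ ∧
    ∀ (x : X) (hx : shiftMap (x : ℤ → A) ∈ X),
      ((φ ⟨shiftMap (x : ℤ → A), hx⟩ : Y) : ℤ → B) = shiftMap ((φ x : Y) : ℤ → B)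

/-- A sofic shift: a factor of a shift of finite type. -/
def IsSofic [TopologicalSpace A] (Y : Set (ℤ → A)) : Prop :=
  ∃ (n : ℕ) (Z : Set (ℤ → Fin n)), IsSubshift Z ∧ IsSFT Z ∧
    ∃ ψ : Z → Y, IsCode ψ ∧ Function.Surjective ψ

/-- Two points are left asymptotic if they agree on all sufficiently negative coordinates. -/
def LeftAsymptotic (x y : ℤ → A) : Prop := ∃ N : ℤ, ∀ i ≤ N, x i = y i

/-- Two points are right asymptotic if they agree on all sufficiently positive coordinates. -/
def RightAsymptotic (x y : ℤ → A) : Prop := ∃ N : ℤ, ∀ i, N ≤ i → x i = y i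

/-- A code is right closing if it never collapses two distinct left asymptotic points. -/
def RightClosing {X : Set (ℤ → A)} {Y : Set (ℤ → B)} (φ : X → Y) : Prop :=
  ∀ x x' : X, LeftAsymptotic (x : ℤ → A) (x' : ℤ → A) → φ x = φ x' → x = x'

/-- A code is left closing if it never collapses two distinct right asymptotic points. -/
def LeftClosing {X : Set (ℤ → A)} {Y : Set (ℤ → B)} (φ : X → Y) : Prop :=
  ∀ x x' : X, RightAsymptotic (x : ℤ → A) (x' : ℤ → A) → φ x = φ x' → x = x'

/-- Bi-closing: both right and left closing. -/
def BiClosing {X : Set (ℤ → A)} {Y : Set (ℤ → B)} (φ : X → Y) : Prop :=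
  RightClosing φ ∧ LeftClosing φ

/-- Finite-to-one map. -/
def FiniteToOne {α β : Type*} (φ : α → β) : Prop := ∀ y : β, (φ ⁻¹' {y}).Finite

/-- Every fiber has exactly `d` elements. -/
def ExactlyDToOne {α β : Type*} (φ : α → β) (d : ℕ) : Prop :=
  ∀ y : β, (φ ⁻¹' {y}).Finite ∧ Nat.card (φ ⁻¹' {y}) = d

/-- Constant-to-one map. -/
def ConstantToOne {α β : Type*} (φ : α → β) : Prop := ∃ d : ℕ, ExactlyDToOne φ d

/-- A doubly transitive point: every word of `Y` occurs infinitely often to the left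
and to the right. -/
def DoublyTransitive (Y : Set (ℤ → A)) (y : ℤ → A) : Prop :=
  ∀ w : List A, WordIn Y w → ∀ N : ℤ,
    (∃ k ≥ N, OccursAt y k w) ∧ (∃ k ≤ N, OccursAt y k w)

/-- The maximal nonwandering subshift of `X`. -/
def OmegaSet [TopologicalSpace A] (X : Set (ℤ → A)) : Set (ℤ → A) :=
  ⋃₀ {Z : Set (ℤ → A) | Z ⊆ X ∧ IsSubshift Z ∧ NonwanderingSubshift Z}

/-- Topological entropy of a subshift, via the growth rate of the number of words. -/
noncomputable def subshiftEntropy (X : Set (ℤ → A)) : ℝ :=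
  Filter.limsup
    (fun n : ℕ => Real.log (Nat.card {w : List A | w.length = n ∧ WordIn X w}) / n)
    Filter.atTop

/-- An irreducible component of `X`: a maximal nonempty irreducible subshift of `X`. -/
def IsIrreducibleComponent [TopologicalSpace A] (X X₀ : Set (ℤ → A)) : Prop :=
  X₀ ⊆ X ∧ IsSubshift X₀ ∧ X₀.Nonempty ∧ IrreducibleSubshift X₀ ∧
    ∀ Z : Set (ℤ → A), Z ⊆ X → IsSubshift Z → IrreducibleSubshift Z → X₀ ⊆ Z → Z = X₀

-- The metric on a shift space: `d(x,y) = 2^{-k}` where `k` is maximal with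
-- `x` and `y` agreeing on `[-k,k]`, and `0` if `x = y`.
open Classical in
noncomputable def shiftDist (x y : ℤ → A) : ℝ :=
  if x = y then 0
  else (2 : ℝ) ^ (-((sSup {n : ℕ | ∀ i : ℤ, |i| ≤ (n : ℤ) → x i = y i} : ℕ) : ℤ))


/-!
Right closing gives a uniform delay `M`: going right, a point of `X` is determined by `M + 1`
consecutive symbols together with its image. Openness gives a uniform radius for lifting points of
`Y` that are close to an image. Gluing two images in the SFT `Y` and lifting the result shows that
points of `X` agreeing on a long enough window can be glued there, so `X` is an SFT. The delay also
bounds every fiber by `|A| ^ (M + 1)`; irreducibility of `Y` puts more copies than that of a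
neighbourhood of a word `u` of `X` into one point `y`, the lifts of these copies lie over `y`, and
two of them coincide: that point contains `u` twice.
-/

def shiftBy (t : ℤ) (x : ℤ → A) : ℤ → A := fun i => x (i + t)

@[simp]
lemma shiftBy_apply (t : ℤ) (x : ℤ → A) (i : ℤ) : shiftBy t x i = x (i + t) := rfl

lemma shiftBy_shiftBy (s t : ℤ) (x : ℤ → A) : shiftBy s (shiftBy t x) = shiftBy (s + t) x :=
  funext fun i => congrArg x (by ring)

lemma shiftBy_zero (x : ℤ → A) : shiftBy 0 x = x := funext fun i => congrArg x (add_zero i)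

lemma shiftBy_add_one (t : ℤ) (x : ℤ → A) : shiftBy (t + 1) x = shiftMap (shiftBy t x) :=
  funext fun i => congrArg x (by ring)

lemma shiftBy_injective (t : ℤ) : Injective (shiftBy t : (ℤ → A) → ℤ → A) := fun x x' h => by
  simpa [shiftBy_shiftBy, shiftBy_zero] using congrArg (shiftBy (-t)) h

namespace IsSubshift

variable [TopologicalSpace A] {X : Set (ℤ → A)}

lemma shiftBy_add_one_mem_iff (hX : IsSubshift X) (t : ℤ) (x : ℤ → A) :
    shiftBy (t + 1) x ∈ X ↔ shiftBy t x ∈ X := by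
  rw [shiftBy_add_one]
  constructor
  · intro h
    obtain ⟨z, hz, hzx⟩ := hX.2.symm ▸ h
    exact shiftBy_injective 1 hzx ▸ hz
  · exact fun h => hX.2 ▸ mem_image_of_mem shiftMap h

lemma shiftBy_mem (hX : IsSubshift X) (t : ℤ) {x : ℤ → A} (hx : x ∈ X) : shiftBy t x ∈ X := by
  induction t using Int.induction_on with
  | zero => rwa [shiftBy_zero]
  | succ n ih => exact (hX.shiftBy_add_one_mem_iff n x).2 ih
  | pred n ih => exact (hX.shiftBy_add_one_mem_iff (-n - 1) x).1 (by rwa [sub_add_cancel])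

def shift (hX : IsSubshift X) (t : ℤ) (x : X) : X := ⟨shiftBy t x.1, hX.shiftBy_mem t x.2⟩

@[simp]
lemma coe_shift (hX : IsSubshift X) (t : ℤ) (x : X) : (hX.shift t x).1 = shiftBy t x.1 := rfl

end IsSubshift

lemma IsCode.apply_shift [TopologicalSpace A] [TopologicalSpace B] {X : Set (ℤ → A)}
    {Y : Set (ℤ → B)} {φ : X → Y} (hφ : IsCode φ) (hX : IsSubshift X) (t : ℤ) (x : X) :
    (φ (hX.shift t x)).1 = shiftBy t (φ x).1 := by
  have step : ∀ s : ℤ, (φ (hX.shift (s + 1) x)).1 = shiftBy 1 (φ (hX.shift s x)).1 := fun s => by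
    have h := hφ.2 (hX.shift s x) (shiftBy_add_one s x.1 ▸ (hX.shift (s + 1) x).2)
    simp only [IsSubshift.coe_shift, ← shiftBy_add_one] at h
    exact h
  induction t using Int.induction_on with
  | zero => rw [shiftBy_zero]; congr; exact Subtype.ext (shiftBy_zero x.1)
  | succ n ih => rw [step, ih, shiftBy_shiftBy, add_comm]
  | pred n ih =>
    apply shiftBy_injective 1
    rw [← step, sub_add_cancel, ih, shiftBy_shiftBy]
    congr 1
    ring

def block (x : ℤ → A) (s : ℤ) (n : ℕ) : List A := List.ofFn fun i : Fin n => x (s + i)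

@[simp]
lemma length_block (x : ℤ → A) (s : ℤ) (n : ℕ) : (block x s n).length = n := List.length_ofFn

lemma occursAt_iff {z : ℤ → A} {k : ℤ} {w : List A} :
    OccursAt z k w ↔ ∀ m (hm : m < w.length), z (k + m) = w[m] :=
  ⟨fun h m hm => h ⟨m, hm⟩, fun h i => h i i.2⟩

lemma occursAt_block_iff {z x : ℤ → A} {k s : ℤ} {n : ℕ} :
    OccursAt z k (block x s n) ↔ EqOn z (shiftBy (s - k) x) (Ico k (k + n)) := by
  simp only [occursAt_iff, block, List.length_ofFn, List.getElem_ofFn, EqOn, mem_Ico,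
    shiftBy_apply]
  constructor
  · intro h i ⟨h₁, h₂⟩
    have := h (i - k).toNat (by omega)
    rw [Int.toNat_of_nonneg (by omega)] at this
    rw [show i + (s - k) = s + (i - k) by ring, ← this]
    congr 1
    ring
  · intro h m hm
    rw [h ⟨by omega, by omega⟩]
    congr 1
    ring

lemma occursAt_block_self (x : ℤ → A) (s : ℤ) (n : ℕ) : OccursAt x s (block x s n) :=
  occursAt_block_iff.2 <| by rw [sub_self, shiftBy_zero]; exact eqOn_refl _ _

lemma OccursAt.congr_eqOn {x x' : ℤ → A} {k : ℤ} {w : List A} (h : OccursAt x k w)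
    (hx : EqOn x x' (Ico k (k + w.length))) : OccursAt x' k w := fun i =>
  (hx ⟨by omega, by omega⟩).symm.trans (h i)

lemma occursAt_shiftBy {x : ℤ → A} {t k : ℤ} {w : List A} :
    OccursAt (shiftBy t x) k w ↔ OccursAt x (k + t) w := by
  simp only [occursAt_iff, shiftBy_apply, add_right_comm k]

lemma occursAt_append {z : ℤ → A} {k : ℤ} {u v : List A} :
    OccursAt z k (u ++ v) ↔ OccursAt z k u ∧ OccursAt z (k + u.length) v := by
  simp only [occursAt_iff, List.length_append]
  constructor
  · intro h
    refine ⟨fun m hm => by simpa [List.getElem_append_left hm] using h m (by omega),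
      fun m hm => ?_⟩
    simpa [add_assoc] using h (u.length + m) (by omega)
  · rintro ⟨hu, hv⟩ m hm
    by_cases hmu : m < u.length
    · rw [List.getElem_append_left hmu, hu m hmu]
    · rw [List.getElem_append_right (by omega), ← hv (m - u.length) (by omega)]
      congr 1
      omega

lemma WordIn.exists_occursAt [TopologicalSpace A] {X : Set (ℤ → A)} (hX : IsSubshift X)
    {w : List A} (h : WordIn X w) (p : ℤ) : ∃ x ∈ X, OccursAt x p w := by
  obtain ⟨x, hx, k, hk⟩ := h
  exact ⟨shiftBy (k - p) x, hX.shiftBy_mem _ hx, occursAt_shiftBy.2 (by rwa [add_sub_cancel])⟩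

lemma wordIn_of_occursAt_of_occursAt {X : Set (ℤ → A)} {z : ℤ → A} (hz : z ∈ X) {u : List A}
    {p p' : ℤ} (h : OccursAt z p u) (h' : OccursAt z p' u) (hpp' : p + u.length ≤ p') :
    WordIn X (u ++ block z (p + u.length) (p' - p - u.length).toNat ++ u) := by
  refine ⟨z, hz, p, occursAt_append.2 ⟨occursAt_append.2 ⟨h, occursAt_block_self _ _ _⟩, ?_⟩⟩
  convert h' using 1
  simp only [List.length_append, length_block]
  omega

section Topology

variable {Z : Type*} [TopologicalSpace Z] [TopologicalSpace A]

lemma isClosed_setOf_eqOn [T2Space A] {f g : Z → ℤ → A} (hf : Continuous f) (hg : Continuous g)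
    (s : Set ℤ) : IsClosed {p | EqOn (f p) (g p) s} := by
  simp only [EqOn, ofPred_forall]
  exact isClosed_biInter fun i _ => isClosed_eq (by fun_prop) (by fun_prop)

lemma isOpen_setOf_eqOn [DiscreteTopology A] {f g : Z → ℤ → A} (hf : Continuous f)
    (hg : Continuous g) {s : Set ℤ} (hs : s.Finite) : IsOpen {p | EqOn (f p) (g p) s} := by
  simp only [EqOn, ofPred_forall]
  exact hs.isOpen_biInter fun i _ =>
    (isOpen_discrete {q : A × A | q.1 = q.2}).preimage (f := fun p => (f p i, g p i)) (by fun_prop)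

lemma exists_subset_of_iInter_subset [CompactSpace Z] {P : ℕ → Set Z}
    (hP : ∀ n, IsClosed (P n)) (hanti : Antitone P) {U : Set Z} (hU : IsOpen U)
    (h : ⋂ n, P n ⊆ U) : ∃ n, P n ⊆ U :=
  exists_subset_nhds_of_isCompact' hanti.directed_ge (fun n => (hP n).isCompact) hP
    fun _ hx => hU.mem_nhds (h hx)

end Topology

section ClosingDelay

variable {X : Set (ℤ → A)} {Y : Set (ℤ → B)} {φ : X → Y} {M : ℕ}

/-- Right closing with delay `M`, uniformly over the points of `X`. -/
def HasClosingDelay (φ : X → Y) (M : ℕ) : Prop :=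
  ∀ (x x' : X) (c : ℤ), EqOn x.1 x'.1 (Icc (c - M) c) →
    EqOn (φ x).1 (φ x').1 (Icc (c - M) (c + M)) → x.1 (c + 1) = x'.1 (c + 1)

lemma HasClosingDelay.eqOn_Icc (hM : HasClosingDelay φ M) {x x' : X} {a b : ℤ}
    (hseed : EqOn x.1 x'.1 (Icc (a - M) a))
    (himg : EqOn (φ x).1 (φ x').1 (Icc (a - M) (b + M))) : EqOn x.1 x'.1 (Icc (a - M) b) := by
  rcases lt_or_ge b a with hba | hab
  · exact hseed.mono (Icc_subset_Icc le_rfl hba.le)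
  induction b, hab using Int.leInduction with
  | base => exact hseed
  | succ n han ih =>
    have hn := ih (himg.mono (Icc_subset_Icc le_rfl (by omega)))
    intro i ⟨h₁, h₂⟩
    rcases (show i ≤ n ∨ i = n + 1 by omega) with hi | rfl
    · exact hn ⟨h₁, hi⟩
    · exact hM x x' n (hn.mono (Icc_subset_Icc (by omega) le_rfl))
        (himg.mono (Icc_subset_Icc (by omega) (by omega)))

lemma HasClosingDelay.eqOn_Ici (hM : HasClosingDelay φ M) {x x' : X} {a : ℤ}
    (hseed : EqOn x.1 x'.1 (Icc (a - M) a)) (himg : EqOn (φ x).1 (φ x').1 (Ici (a - M))) :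
    EqOn x.1 x'.1 (Ici (a - M)) := fun i hi =>
  hM.eqOn_Icc (b := i) hseed (himg.mono Icc_subset_Ici_self) ⟨hi, le_rfl⟩

lemma HasClosingDelay.eq_of_frequently_eqOn (hM : HasClosingDelay φ M) {x x' : X}
    (himg : φ x = φ x') (h : ∀ n : ℤ, ∃ a ≤ n, EqOn x.1 x'.1 (Icc (a - M) a)) : x = x' :=
  Subtype.ext <| funext fun i => by
    obtain ⟨a, hai, ha⟩ := h i
    exact hM.eqOn_Icc ha (himg ▸ eqOn_refl _ _) ⟨by omega, le_rfl⟩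

/-- Two of the points agree on infinitely many windows far to the left, and the delay carries
that agreement to the right. -/
lemma HasClosingDelay.not_injective [Finite A] (hM : HasClosingDelay φ M) {ι : Type*} [Finite ι]
    (f : ι → X) (hf : ∀ j j', φ (f j) = φ (f j'))
    (hcard : Nat.card (Fin (M + 1) → A) < Nat.card ι) :
    ¬ Injective f := by
  intro hinj
  have hpair : ∀ n : ℕ, ∃ jj : ι × ι, jj.1 ≠ jj.2 ∧
      EqOn (f jj.1).1 (f jj.2).1 (Icc (-(n : ℤ) - M) (-n)) := by
    intro n
    obtain ⟨j, j', heq, hjj'⟩ := not_injective_iff.1 fun hinj' =>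
      hcard.not_ge (Nat.card_le_card_of_injective
        (fun j (k : Fin (M + 1)) => (f j).1 (-(n : ℤ) - M + k)) hinj')
    refine ⟨(j, j'), hjj', fun i ⟨h₁, h₂⟩ => ?_⟩
    have := congrFun heq ⟨(i + n + M).toNat, by omega⟩
    simp only at this
    rwa [Int.toNat_of_nonneg (by omega), show -(n : ℤ) - M + (i + n + M) = i by ring] at this
  choose jj hne hjj using hpair
  obtain ⟨pr, hpr⟩ := Finite.exists_infinite_fiber jj
  have hinf : (jj ⁻¹' {pr}).Infinite := infinite_coe_iff.1 hpr
  have hfreq : ∀ a : ℤ, ∃ n, jj n = pr ∧ -(n : ℤ) ≤ a := fun a => by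
    obtain ⟨n, hn, han⟩ := hinf.exists_gt a.natAbs
    exact ⟨n, hn, by omega⟩
  obtain ⟨n₀, hn₀, -⟩ := hfreq 0
  refine (hn₀ ▸ hne n₀) (hinj (hM.eq_of_frequently_eqOn (hf _ _) fun a => ?_))
  obtain ⟨n, hn, hna⟩ := hfreq a
  exact ⟨-n, hna, by simpa [hn] using hjj n⟩

end ClosingDelay

lemma IsSubshift.compactSpace [Finite A] [TopologicalSpace A] {X : Set (ℤ → A)}
    (hX : IsSubshift X) : CompactSpace X :=
  isCompact_iff_compactSpace.mp hX.1.isCompact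

section Compactness

variable [Finite A] [TopologicalSpace A] [DiscreteTopology A] [TopologicalSpace B]
  [DiscreteTopology B] {X : Set (ℤ → A)} {Y : Set (ℤ → B)} {φ : X → Y}

lemma IsCode.exists_radius (hX : IsSubshift X) (hφ : IsCode φ) :
    ∃ r : ℕ, ∀ (x x' : X) (c : ℤ), EqOn x.1 x'.1 (Icc (c - r) (c + r)) →
      (φ x).1 c = (φ x').1 c := by
  have := hX.compactSpace
  have hφc := hφ.1
  obtain ⟨r, hr⟩ := exists_subset_of_iInter_subset
    (P := fun n : ℕ => {p : X × X | EqOn p.1.1 p.2.1 (Icc (-n) n)})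
    (U := {p | EqOn (φ p.1).1 (φ p.2).1 {0}})
    (fun n => isClosed_setOf_eqOn (by fun_prop) (by fun_prop) _)
    (fun m n hmn p hp => hp.mono (Icc_subset_Icc (by omega) (by omega)))
    (isOpen_setOf_eqOn (by fun_prop) (by fun_prop) (finite_singleton 0))
    fun p hp => by
      have hp' : p.1 = p.2 :=
        Subtype.ext <| funext fun i => mem_iInter.1 hp i.natAbs ⟨by omega, by omega⟩
      rw [mem_ofPred_eq, hp']
      exact eqOn_refl _ _
  refine ⟨r, fun x x' c h => ?_⟩
  have := hr (a := (hX.shift c x, hX.shift c x')) (fun i ⟨h₁, h₂⟩ => h ⟨by omega, by omega⟩)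
    (mem_singleton 0)
  simpa [hφ.apply_shift] using this

lemma RightClosing.exists_hasClosingDelay (hX : IsSubshift X) (hφ : IsCode φ)
    (hrc : RightClosing φ) : ∃ M, HasClosingDelay φ M := by
  have := hX.compactSpace
  have hφc := hφ.1
  obtain ⟨M, hM⟩ := exists_subset_of_iInter_subset
    (P := fun n : ℕ => {p : X × X | EqOn p.1.1 p.2.1 (Icc (-n) 0)} ∩
      {p | EqOn (φ p.1).1 (φ p.2).1 (Icc (-n) n)})
    (U := {p | EqOn p.1.1 p.2.1 {1}})
    (fun n => (isClosed_setOf_eqOn (by fun_prop) (by fun_prop) _).inter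
      (isClosed_setOf_eqOn (by fun_prop) (by fun_prop) _))
    (fun m n hmn p hp => ⟨hp.1.mono (Icc_subset_Icc (by omega) le_rfl),
      hp.2.mono (Icc_subset_Icc (by omega) (by omega))⟩)
    (isOpen_setOf_eqOn (by fun_prop) (by fun_prop) (finite_singleton 1))
    fun p hp => by
      have hasymp : LeftAsymptotic p.1.1 p.2.1 :=
        ⟨0, fun i hi => (mem_iInter.1 hp i.natAbs).1 ⟨by omega, hi⟩⟩
      have himg : φ p.1 = φ p.2 :=
        Subtype.ext <| funext fun i => (mem_iInter.1 hp i.natAbs).2 ⟨by omega, by omega⟩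
      rw [mem_ofPred_eq, hrc _ _ hasymp himg]
      exact eqOn_refl _ _
  refine ⟨M, fun x x' c hx himg => ?_⟩
  have := hM (a := (hX.shift c x, hX.shift c x'))
    ⟨fun i ⟨h₁, h₂⟩ => hx ⟨by omega, by omega⟩, fun i ⟨h₁, h₂⟩ => by
      simpa [hφ.apply_shift] using himg ⟨by omega, by omega⟩⟩ (mem_singleton 1)
  simpa [add_comm] using this

lemma IsOpenMap.exists_lift_radius [Finite B] (hX : IsSubshift X) (hY : IsSubshift Y)
    (hφ : IsCode φ) (hopen : IsOpenMap φ) (M : ℕ) :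
    ∃ K : ℕ, ∀ (x : X) (y : Y) (c : ℤ), EqOn y.1 (φ x).1 (Icc (c - K) (c + K)) →
      ∃ x' : X, φ x' = y ∧ EqOn x'.1 x.1 (Icc (c - M) (c + M)) := by
  have := hX.compactSpace
  have := hY.compactSpace
  have hφc := hφ.1
  set V : X → Set X := fun x₀ => {z | EqOn z.1 x₀.1 (Icc (-M) M)}
  have hV : ∀ x₀, IsOpen (V x₀) := fun x₀ =>
    isOpen_setOf_eqOn (by fun_prop) continuous_const (finite_Icc _ _)
  obtain ⟨K, hK⟩ := exists_subset_of_iInter_subset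
    (P := fun n : ℕ => {p : X × Y | EqOn p.2.1 (φ p.1).1 (Icc (-n) n)})
    -- an open neighbourhood of the graph of `φ`, since `φ` is open
    (U := ⋃ x₀, V x₀ ×ˢ (φ '' V x₀))
    (fun n => isClosed_setOf_eqOn (by fun_prop) (by fun_prop) _)
    (fun m n hmn p hp => hp.mono (Icc_subset_Icc (by omega) (by omega)))
    (isOpen_iUnion fun x₀ => (hV x₀).prod (hopen _ (hV x₀)))
    fun p hp => by
      have hp' : p.2 = φ p.1 :=
        Subtype.ext <| funext fun i => mem_iInter.1 hp i.natAbs ⟨by omega, by omega⟩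
      exact mem_iUnion.2 ⟨p.1, eqOn_refl _ _, p.1, eqOn_refl _ _, hp'.symm⟩
  refine ⟨K, fun x y c h => ?_⟩
  obtain ⟨x₀, hx₀, z, hz, hzy⟩ := mem_iUnion.1 <| hK (a := (hX.shift c x, hY.shift c y))
    fun i ⟨h₁, h₂⟩ => by simpa [hφ.apply_shift] using h ⟨by omega, by omega⟩
  refine ⟨hX.shift (-c) z, Subtype.ext ?_, fun i ⟨h₁, h₂⟩ => ?_⟩
  · rw [hφ.apply_shift, hzy, IsSubshift.coe_shift, shiftBy_shiftBy, neg_add_cancel, shiftBy_zero]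
  · have := (hz ⟨by omega, by omega⟩ : z.1 (i + -c) = x₀.1 (i + -c)).trans
      (hx₀ ⟨by omega, by omega⟩).symm
    simpa using this

lemma HasClosingDelay.exists_lift_eqOn [Finite B] (hX : IsSubshift X) (hY : IsSubshift Y)
    (hφ : IsCode φ) (hopen : IsOpenMap φ) {M : ℕ} (hM : HasClosingDelay φ M) :
    ∃ K : ℕ, ∀ (x : X) (y : Y) (a b : ℤ), a ≤ b → EqOn y.1 (φ x).1 (Icc (a - K) (b + K)) →
      ∃ x' : X, φ x' = y ∧ EqOn x'.1 x.1 (Icc a b) := by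
  obtain ⟨K, hK⟩ := hopen.exists_lift_radius hX hY hφ M
  refine ⟨K + M, fun x y a b hab h => ?_⟩
  obtain ⟨x', rfl, hx'⟩ := hK x y a (h.mono (Icc_subset_Icc (by omega) (by omega)))
  exact ⟨x', rfl, (hM.eqOn_Icc (hx'.mono (Icc_subset_Icc le_rfl (by omega)))
    (h.mono (Icc_subset_Icc (by omega) (by omega)))).mono (Icc_subset_Icc (by omega) le_rfl)⟩

end Compactness

lemma IsSFT.exists_piecewise_mem {Y : Set (ℤ → B)} (hY : IsSFT Y) :
    ∃ g : ℕ, ∀ y ∈ Y, ∀ y' ∈ Y, ∀ p : ℤ, EqOn y y' (Icc p (p + g)) →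
      (Iio p).piecewise y y' ∈ Y := by
  obtain ⟨F, rfl⟩ := hY
  refine ⟨F.sup List.length, fun y hy y' hy' p hyy' w hw k hk => ?_⟩
  have hlen : w.length ≤ F.sup List.length := Finset.le_sup hw
  rcases lt_or_ge k p with hkp | hpk
  · refine hy w hw k (hk.congr_eqOn fun i ⟨h₁, h₂⟩ => ?_)
    by_cases hi : i < p
    · exact piecewise_eq_of_mem (Iio p) _ _ hi
    · rw [piecewise_eq_of_notMem (Iio p) _ _ hi]
      exact (hyy' ⟨by omega, by omega⟩).symm
  · exact hy' w hw k <| hk.congr_eqOn fun i ⟨h₁, _⟩ =>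
      piecewise_eq_of_notMem (Iio p) _ _ (by simp only [mem_Iio, not_lt]; omega)

/-- The left part is only kept on a finite, arbitrarily long, window `[c, a]`: that is what
lifting through `φ` provides. -/
def HasOverlapGluing (X : Set (ℤ → A)) (N : ℕ) : Prop :=
  ∀ x ∈ X, ∀ x' ∈ X, ∀ a c : ℤ, EqOn x x' (Icc a (a + N)) →
    ∃ z ∈ X, EqOn z x (Icc c a) ∧ EqOn z x' (Ici a)

lemma HasOverlapGluing.exists_eqOn_Icc {X : Set (ℤ → A)} {N : ℕ} (hX : HasOverlapGluing X N)
    {x : ℤ → A} {a₁ b₁ a₂ b₂ : ℤ} (h₁ : ∃ z ∈ X, EqOn z x (Icc a₁ b₁))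
    (h₂ : ∃ z ∈ X, EqOn z x (Icc a₂ b₂)) (ha : a₁ ≤ a₂) (hb : a₂ + N ≤ b₁) (hb' : b₁ ≤ b₂) :
    ∃ z ∈ X, EqOn z x (Icc a₁ b₂) := by
  obtain ⟨z₁, hz₁, e₁⟩ := h₁
  obtain ⟨z₂, hz₂, e₂⟩ := h₂
  obtain ⟨z, hz, hzl, hzr⟩ := hX z₁ hz₁ z₂ hz₂ a₂ a₁ fun i ⟨h, h'⟩ =>
    (e₁ ⟨by omega, by omega⟩).trans (e₂ ⟨h, by omega⟩).symm
  refine ⟨z, hz, fun i ⟨h, h'⟩ => ?_⟩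
  rcases le_or_gt i a₂ with hi | hi
  · exact (hzl ⟨h, hi⟩).trans (e₁ ⟨h, by omega⟩)
  · exact (hzr hi.le).trans (e₂ ⟨hi.le, h'⟩)

lemma IsClosed.mem_of_forall_exists_eqOn [TopologicalSpace A] {X : Set (ℤ → A)}
    (hX : IsClosed X) {x : ℤ → A} (h : ∀ n : ℕ, ∃ z ∈ X, EqOn z x (Icc (-n) n)) : x ∈ X := by
  choose z hzX hz using h
  refine hX.mem_of_tendsto (b := atTop) (tendsto_pi_nhds.2 fun i => tendsto_const_nhds.congr' ?_)
    (Eventually.of_forall hzX)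
  filter_upwards [eventually_ge_atTop i.natAbs] with n hn
  exact (hz n ⟨by omega, by omega⟩).symm

lemma WordIn.exists_eqOn_of_block [TopologicalSpace A] {X : Set (ℤ → A)} (hX : IsSubshift X)
    {x : ℤ → A} {s : ℤ} {n : ℕ} (h : WordIn X (block x s n)) :
    ∃ z ∈ X, EqOn z x (Ico s (s + n)) := by
  obtain ⟨z, hz, hocc⟩ := h.exists_occursAt hX s
  exact ⟨z, hz, by simpa [shiftBy_zero] using occursAt_block_iff.1 hocc⟩

/-- Forbidding the words of length `N + 2` outside the language of `X` cuts out `X`. -/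
lemma IsSubshift.isSFT_of_hasOverlapGluing [Finite A] [TopologicalSpace A] {X : Set (ℤ → A)}
    (hX : IsSubshift X) {N : ℕ} (hglue : HasOverlapGluing X N) : IsSFT X := by
  classical
  have := Fintype.ofFinite A
  refine ⟨(Finset.univ.image fun f : Fin (N + 2) → A => List.ofFn f).filter (¬ WordIn X ·), ?_⟩
  ext x
  simp only [Finset.mem_filter, Finset.mem_image, Finset.mem_univ, true_and, mem_ofPred_eq]
  refine ⟨fun hx w hw k hk => hw.2 ⟨x, hx, k, hk⟩, fun hx => ?_⟩
  have hwin : ∀ s : ℤ, ∃ z ∈ X, EqOn z x (Icc s (s + N + 1)) := fun s => by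
    have hword : WordIn X (block x s (N + 2)) := by
      by_contra hw
      exact hx _ ⟨⟨fun i => x (s + i), rfl⟩, hw⟩ s (occursAt_block_self x s (N + 2))
    obtain ⟨z, hz, e⟩ := hword.exists_eqOn_of_block hX
    exact ⟨z, hz, e.mono (Icc_subset_Ico_right (by omega))⟩
  have hgrow : ∀ n : ℕ, ∃ z ∈ X, EqOn z x (Icc (-n) (n + N + 1)) := by
    intro n
    induction n with
    | zero => simpa using hwin 0
    | succ n ih =>
      have hright : ∃ z ∈ X, EqOn z x (Icc (-n) (n + 1 + N + 1)) :=
        hglue.exists_eqOn_Icc ih (hwin (n + 1)) (by omega) (by omega) (by omega)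
      push_cast
      exact hglue.exists_eqOn_Icc (hwin _) hright (by omega) (by omega) (by omega)
  exact hX.1.mem_of_forall_exists_eqOn fun n =>
    (hgrow n).imp fun z ⟨hz, e⟩ => ⟨hz, e.mono (Icc_subset_Icc le_rfl (by omega))⟩

section RightClosingOpen

variable [Finite A] [TopologicalSpace A] [DiscreteTopology A] [Finite B] [TopologicalSpace B]
  [DiscreteTopology B] {X : Set (ℤ → A)} {Y : Set (ℤ → B)} {φ : X → Y}

/-- Glue the images in `Y` at `p`, lift the glued point near `a`, and let the closing delay carry
the agreement with `x'` to the right. -/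
lemma RightClosing.exists_hasOverlapGluing (hrc : RightClosing φ) (hX : IsSubshift X)
    (hY : IsSubshift Y) (hφ : IsCode φ) (hopen : IsOpenMap φ) (hYsft : IsSFT Y) :
    ∃ N, HasOverlapGluing X N := by
  obtain ⟨r, hr⟩ := hφ.exists_radius hX
  obtain ⟨M, hM⟩ := hrc.exists_hasClosingDelay hX hφ
  obtain ⟨K, hK⟩ := hM.exists_lift_eqOn hX hY hφ hopen
  obtain ⟨g, hg⟩ := hYsft.exists_piecewise_mem
  refine ⟨2 * r + g + K + M, fun x hx x' hx' a c hxx' => ?_⟩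
  set p : ℤ := a + r with hp
  set s : ℤ := a + (2 * r + g + K + M : ℕ) - r - K with hs
  have himg : EqOn (φ ⟨x, hx⟩).1 (φ ⟨x', hx'⟩).1 (Icc p (s + K)) := fun i ⟨h₁, h₂⟩ =>
    hr ⟨x, hx⟩ ⟨x', hx'⟩ i (hxx'.mono (Icc_subset_Icc (by omega) (by omega)))
  let y : Y := ⟨(Iio p).piecewise (φ ⟨x, hx⟩).1 (φ ⟨x', hx'⟩).1,
    hg _ (φ _).2 _ (φ _).2 p (himg.mono (Icc_subset_Icc le_rfl (by omega)))⟩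
  have hyx : EqOn y.1 (φ ⟨x, hx⟩).1 (Iic (s + K)) := fun i hi => by
    by_cases hip : i < p
    · exact piecewise_eq_of_mem (Iio p) _ _ hip
    · exact (piecewise_eq_of_notMem (Iio p) _ _ hip).trans (himg ⟨not_lt.1 hip, hi⟩).symm
  have hyx' : EqOn y.1 (φ ⟨x', hx'⟩).1 (Ici p) := fun i hi =>
    piecewise_eq_of_notMem (Iio p) _ _ (not_lt.2 (show p ≤ i from hi))
  obtain ⟨z, hzy, hzx⟩ := hK ⟨x, hx⟩ y (min c a) s (by omega) (hyx.mono fun i hi => hi.2)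
  have hzx' : EqOn z.1 x' (Ici (s - M)) := hM.eqOn_Ici (x' := ⟨x', hx'⟩)
    (fun i ⟨h₁, h₂⟩ => (hzx ⟨by omega, h₂⟩).trans (hxx' ⟨by omega, by omega⟩))
    (hzy ▸ hyx'.mono (Ici_subset_Ici.2 (by omega)))
  refine ⟨z, z.2, hzx.mono (Icc_subset_Icc (min_le_left _ _) (by omega)), fun i hi => ?_⟩
  rw [mem_Ici] at hi
  by_cases his : s - M ≤ i
  · exact hzx' his
  · exact (hzx ⟨by omega, by omega⟩).trans (hxx' ⟨hi, by omega⟩)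

end RightClosingOpen

lemma IrreducibleSubshift.exists_finset_occursAt [TopologicalSpace B] {Y : Set (ℤ → B)}
    (hY : IsSubshift Y) (hirr : IrreducibleSubshift Y) {w : List B} (hw : WordIn Y w) (n : ℕ) :
    ∃ y ∈ Y, ∃ S : Finset ℤ, S.card = n ∧ (∀ p ∈ S, OccursAt y p w) ∧
      ∀ p ∈ S, ∀ p' ∈ S, p < p' → p + w.length ≤ p' := by
  induction n with
  | zero =>
    obtain ⟨y, hy, -⟩ := hw
    exact ⟨y, hy, ∅, rfl, by simp, by simp⟩
  | succ n ih =>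
    obtain ⟨y, hy, S, hcard, hocc, hsep⟩ := ih
    obtain ⟨l, hl⟩ := S.bddBelow
    obtain ⟨b, hb⟩ := S.bddAbove
    set len := (b + w.length + 1 - l).toNat with hlen
    obtain ⟨v, hv⟩ := hirr _ w ⟨y, hy, l, occursAt_block_self y l len⟩ hw
    obtain ⟨y', hy', hocc'⟩ := hv.exists_occursAt hY l
    obtain ⟨⟨hblock, -⟩, hlast⟩ := occursAt_append.1 hocc' |>.imp_left occursAt_append.1
    have hagree : EqOn y y' (Ico l (l + len)) := by
      simpa [shiftBy_zero] using (occursAt_block_iff.1 hblock).symm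
    set q := l + (block y l len ++ v).length with hq
    have hbq : b + w.length < q := by
      simp only [hq, List.length_append, length_block]
      omega
    refine ⟨y', hy', insert q S, ?_, ?_, ?_⟩
    · rw [Finset.card_insert_of_notMem fun hqS => by have := hb hqS; omega, hcard]
    · simp only [Finset.mem_insert, forall_eq_or_imp]
      refine ⟨hlast, fun p hp => (hocc p hp).congr_eqOn (hagree.mono fun i hi => ?_)⟩
      have := hl hp
      have := hb hp
      simp only [mem_Ico] at hi ⊢
      omega
    · simp only [Finset.mem_insert]
      rintro p (rfl | hp) p' (rfl | hp') hpp'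
      · exact absurd hpp' (lt_irrefl _)
      · have := hb hp'
        omega
      · have := hb hp
        omega
      · exact hsep p hp p' hp' hpp'

theorem RightClosing.nonwanderingSubshift [Finite A] [TopologicalSpace A] [DiscreteTopology A]
    [Finite B] [TopologicalSpace B] [DiscreteTopology B] {X : Set (ℤ → A)} {Y : Set (ℤ → B)}
    {φ : X → Y} (hrc : RightClosing φ) (hX : IsSubshift X) (hY : IsSubshift Y) (hφ : IsCode φ)
    (hopen : IsOpenMap φ) (hYirr : IrreducibleSubshift Y) :
    NonwanderingSubshift X := by
  obtain ⟨M, hM⟩ := hrc.exists_hasClosingDelay hX hφ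
  obtain ⟨K, hK⟩ := hM.exists_lift_eqOn hX hY hφ hopen
  intro u hu
  obtain ⟨x, hx, hxu⟩ := hu.exists_occursAt hX 0
  -- occurrences of the block of `φ x` around `u`, padded by `K` on both sides, lift
  obtain ⟨y, hy, S, hcard, hocc, hsep⟩ := hYirr.exists_finset_occursAt hY
    ⟨_, (φ ⟨x, hx⟩).2, -K, occursAt_block_self _ (-K) (2 * K + u.length + 1)⟩
    (Nat.card (Fin (M + 1) → A) + 1)
  have hlift : ∀ p ∈ S, ∃ x' : X, φ x' = ⟨y, hy⟩ ∧ OccursAt x'.1 (p + K) u := by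
    intro p hp
    set x₀ := hX.shift (-K - p) ⟨x, hx⟩
    have hyx₀ : EqOn y (φ x₀).1 (Icc (p + K - K) (p + K + u.length + K)) := by
      rw [hφ.apply_shift]
      refine (occursAt_block_iff.1 (hocc p hp)).mono fun i hi => ?_
      simp only [mem_Icc, mem_Ico] at hi ⊢
      omega
    obtain ⟨x', hx'y, hx'⟩ := hK x₀ ⟨y, hy⟩ (p + K) (p + K + u.length) (by omega) hyx₀
    have hx₀u : OccursAt x₀.1 (p + K) u := by
      rw [IsSubshift.coe_shift, occursAt_shiftBy, show p + K + (-K - p) = 0 by ring]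
      exact hxu
    exact ⟨x', hx'y, hx₀u.congr_eqOn (hx'.symm.mono Ico_subset_Icc_self)⟩
  choose f hfy hfu using hlift
  have hreturn : ∀ p hp p' hp', f p hp = f p' hp' → p < p' → ∃ v, WordIn X (u ++ v ++ u) :=
    fun p hp p' hp' hff hpp' => ⟨_, wordIn_of_occursAt_of_occursAt (f p hp).2 (hfu p hp)
      (hff ▸ hfu p' hp') (by
        have := hsep p hp p' hp' hpp'
        simp only [length_block] at this
        omega)⟩
  obtain ⟨⟨p, hp⟩, ⟨p', hp'⟩, hff, hne⟩ := not_injective_iff.1 <|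
    hM.not_injective (fun j : S => f j j.2) (fun j j' => by rw [hfy, hfy])
      (by simp [Nat.card_eq_fintype_card, hcard])
  rcases lt_or_gt_of_ne (Subtype.coe_ne_coe.2 hne) with hpp' | hpp'
  · exact hreturn p hp p' hp' hff hpp'
  · exact hreturn p' hp' p hp hff.symm hpp'

theorem right_closing_open_ext_of_SFT {A : Type*} {B : Type*} [Finite A] [TopologicalSpace A] [DiscreteTopology A]
    [Finite B] [TopologicalSpace B] [DiscreteTopology B]
    {X : Set (ℤ → A)} {Y : Set (ℤ → B)} (hX : IsSubshift X) (hY : IsSubshift Y)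
    (φ : X → Y) (hφ : IsCode φ)
    (hYsft : IsSFT Y) (hYirr : IrreducibleSubshift Y)
    (hrc : RightClosing φ) (hopen : IsOpenMap φ) :
    NonwanderingSubshift X ∧ IsSFT X := by
  obtain ⟨N, hN⟩ := hrc.exists_hasOverlapGluing hX hY hφ hopen hYsft
  exact ⟨hrc.nonwanderingSubshift hX hY hφ hopen hYirr, hX.isSFT_of_hasOverlapGluing hN⟩
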